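/- arXiv:2006.10330 — 3 statements merged into one kernel-verified Lean document; each statement's English description precedes it below -/
import Mathlib

section
/- Let σ: ℝ → ℝ be an arbitrary function applied componentwise. Let T > 0, let θ1: [0,T] → ℝ^{d×d'} and b1: [0,T] → ℝ^d be continuous, and let θ2: [0,T] → ℝ^{d'×d} and b2: [0,T] → ℝ^{d'} be continuously differentiable. Suppose q: [0,T] → ℝ^d is differentiable and satisfies q̇(t) = θ1(t) σ(θ2(t) q(t) + b2(t)) + b1(t) for all t. Define v(t) := θ2(t) q(t) + b2(t). Then v is differentiable and the pair (q, v) satisfies the UpDown model with parameters θ1, b1, θ̂2(t) := θ2'(t), b̂2(t) := b2'(t) + θ2(t) b1(t), θ3(t) := θ2(t) θ1(t); that is, q̇(t) = θ1(t) σ(v(t)) + b1(t) and v̇(t) = θ̂2(t) q(t) + b̂2(t) + θ3(t) σ(v(t)) for all t ∈ [0,T], with v(0) = θ2(0) q(0) + b2(0). -/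
open Set

/-- Matrix-vector product for matrices represented as functions. -/
def mvec {m n : ℕ} (A : Fin m → Fin n → ℝ) (x : Fin n → ℝ) : Fin m → ℝ :=
  fun i => ∑ j, A i j * x j

/-- Matrix-matrix product for matrices represented as functions. -/
def mmul {m n p : ℕ} (A : Fin m → Fin n → ℝ) (B : Fin n → Fin p → ℝ) :
    Fin m → Fin p → ℝ :=
  fun i j => ∑ l, A i l * B l j

theorem mvec_add {m n : ℕ} (A : Fin m → Fin n → ℝ) (x y : Fin n → ℝ) :
    mvec A (x + y) = mvec A x + mvec A y :=
  Matrix.mulVec_add (Matrix.of A) x y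

theorem mvec_mvec {m n p : ℕ} (A : Fin m → Fin n → ℝ) (B : Fin n → Fin p → ℝ)
    (x : Fin p → ℝ) : mvec A (mvec B x) = mvec (mmul A B) x :=
  Matrix.mulVec_mulVec x (Matrix.of A) (Matrix.of B)

theorem HasDerivWithinAt.mvec {m n : ℕ} {A : ℝ → Fin m → Fin n → ℝ} {x : ℝ → Fin n → ℝ}
    {A' : Fin m → Fin n → ℝ} {x' : Fin n → ℝ} {s : Set ℝ} {t : ℝ}
    (hA : HasDerivWithinAt A A' s t) (hx : HasDerivWithinAt x x' s t) :
    HasDerivWithinAt (fun u => mvec (A u) (x u)) (mvec A' (x t) + mvec (A t) x') s t := by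
  refine hasDerivWithinAt_pi.mpr fun i => ?_
  have hentry (j : Fin n) :
      HasDerivWithinAt (fun u => A u i j * x u j) (A' i j * x t j + A t i j * x' j) s t :=
    (hasDerivWithinAt_pi.mp (hasDerivWithinAt_pi.mp hA i) j).mul (hasDerivWithinAt_pi.mp hx j)
  simpa only [_root_.mvec, Pi.add_apply, Finset.sum_add_distrib] using
    HasDerivWithinAt.fun_sum fun j _ => hentry j

theorem single_hidden_layer_to_updown_general
    (d d' : ℕ) (σ : ℝ → ℝ) (T : ℝ)
    (θ1 : ℝ → Fin d → Fin d' → ℝ) (b1 : ℝ → Fin d → ℝ)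
    (θ2 : ℝ → Fin d' → Fin d → ℝ) (b2 : ℝ → Fin d' → ℝ)
    (θ2' : ℝ → Fin d' → Fin d → ℝ) (b2' : ℝ → Fin d' → ℝ)
    (hθ2 : ∀ t ∈ Icc (0:ℝ) T, HasDerivWithinAt θ2 (θ2' t) (Icc 0 T) t)
    (hb2 : ∀ t ∈ Icc (0:ℝ) T, HasDerivWithinAt b2 (b2' t) (Icc 0 T) t)
    (q : ℝ → Fin d → ℝ)
    (hq : ∀ t ∈ Icc (0:ℝ) T,
      HasDerivWithinAt q
        (mvec (θ1 t) (fun i => σ ((mvec (θ2 t) (q t) + b2 t) i)) + b1 t)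
        (Icc 0 T) t)
    (v : ℝ → Fin d' → ℝ)
    (hv : v = fun t => mvec (θ2 t) (q t) + b2 t) :
    (∀ t ∈ Icc (0:ℝ) T,
      HasDerivWithinAt q (mvec (θ1 t) (fun i => σ (v t i)) + b1 t) (Icc 0 T) t) ∧
    (∀ t ∈ Icc (0:ℝ) T,
      HasDerivWithinAt v
        (mvec (θ2' t) (q t) + (b2' t + mvec (θ2 t) (b1 t))
          + mvec (mmul (θ2 t) (θ1 t)) (fun i => σ (v t i)))
        (Icc 0 T) t) ∧
    v 0 = mvec (θ2 0) (q 0) + b2 0 := by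
  subst hv
  refine ⟨hq, fun t ht => ?_, rfl⟩
  refine (((hθ2 t ht).mvec (hq t ht)).add (hb2 t ht)).congr_deriv ?_
  rw [mvec_add, mvec_mvec]
  abel

/-- From the single-hidden-layer ODE to the `UpDown` model: if `q` solves
`q̇ = θ1 σ(θ2 q + b2) + b1` on `[0,T]`, then `v := θ2 q + b2` is differentiable and
`(q, v)` solves the `UpDown` model with parameters `θ1, b1, θ2', b2' + θ2 b1, θ2 θ1`
and initial condition `v 0 = θ2(0) q(0) + b2(0)`. -/
theorem single_hidden_layer_to_updown
    (d d' : ℕ) (σ : ℝ → ℝ) (T : ℝ) (hT : 0 < T)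
    (θ1 : ℝ → Fin d → Fin d' → ℝ) (b1 : ℝ → Fin d → ℝ)
    (θ2 : ℝ → Fin d' → Fin d → ℝ) (b2 : ℝ → Fin d' → ℝ)
    (θ2' : ℝ → Fin d' → Fin d → ℝ) (b2' : ℝ → Fin d' → ℝ)
    (hθ1 : ContinuousOn θ1 (Icc 0 T)) (hb1 : ContinuousOn b1 (Icc 0 T))
    (hθ2 : ∀ t ∈ Icc (0:ℝ) T, HasDerivWithinAt θ2 (θ2' t) (Icc 0 T) t)
    (hθ2' : ContinuousOn θ2' (Icc 0 T))
    (hb2 : ∀ t ∈ Icc (0:ℝ) T, HasDerivWithinAt b2 (b2' t) (Icc 0 T) t)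
    (hb2' : ContinuousOn b2' (Icc 0 T))
    (q : ℝ → Fin d → ℝ)
    (hq : ∀ t ∈ Icc (0:ℝ) T,
      HasDerivWithinAt q
        (mvec (θ1 t) (fun i => σ ((mvec (θ2 t) (q t) + b2 t) i)) + b1 t)
        (Icc 0 T) t)
    (v : ℝ → Fin d' → ℝ)
    (hv : v = fun t => mvec (θ2 t) (q t) + b2 t) :
    (∀ t ∈ Icc (0:ℝ) T,
      HasDerivWithinAt q (mvec (θ1 t) (fun i => σ (v t i)) + b1 t) (Icc 0 T) t) ∧
    (∀ t ∈ Icc (0:ℝ) T,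
      HasDerivWithinAt v
        (mvec (θ2' t) (q t) + (b2' t + mvec (θ2 t) (b1 t))
          + mvec (mmul (θ2 t) (θ1 t)) (fun i => σ (v t i)))
        (Icc 0 T) t) ∧
    v 0 = mvec (θ2 0) (q 0) + b2 0 :=
  single_hidden_layer_to_updown_general d d' σ T θ1 b1 θ2 b2 θ2' b2' hθ2 hb2 q hq v hv
end

section
/- Let F be a nonempty set of time-dependent vector fields f: [0,1] × ℝ^d → ℝ^d, each continuous in t and Lipschitz in x, and let z_1, ..., z_n ∈ ℝ^d be points such that for each f ∈ F and each i the flow φ^f(t, z_i) exists on [0,1]. Fix a component index k ∈ {1, ..., d}. Assume that for every sign vector ε ∈ {−1, 1}^n the suprema sup_{f ∈ F} Σ_{i=1}^n ε_i (φ^f(1, z_i))_k and, for each t ∈ [0,1], sup_{f ∈ F} Σ_{i=1}^n ε_i f_k(t, φ^f(t, z_i)) are finite, and that t ↦ E_ε[sup_{f ∈ F} Σ_{i=1}^n ε_i f_k(t, φ^f(t, z_i))] is integrable on [0,1]. Then E_ε[ sup_{f ∈ F} Σ_{i=1}^n ε_i (φ^f(1, z_i))_k ] ≤ ∫_0^1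 E_ε[ sup_{f ∈ F} Σ_{i=1}^n ε_i f_k(t, φ^f(t, z_i)) ] dt, where E_ε denotes the average over ε uniform on {−1, 1}^n. -/
open Set

/-- The sign `±1` associated with a Boolean Rademacher variable. -/
def sg (b : Bool) : ℝ := if b then 1 else -1

/-!
Along each flow, `(φ^f(1, zᵢ))ₖ = (zᵢ)ₖ + ∫₀¹ fₖ(t, φ^f(t, zᵢ)) dt`. The initial term
`Σᵢ εᵢ (zᵢ)ₖ` does not depend on `f` and has Rademacher average zero, so it drops out. For any
choice `ε ↦ f_ε ∈ F`, the average of `Σᵢ εᵢ (φ^{f_ε}(1, zᵢ))ₖ` is then the integral of the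
average of `Σᵢ εᵢ (f_ε)ₖ(t, φ^{f_ε}(t, zᵢ))`, which is pointwise at most the average of the
suprema; taking the supremum over the choices `ε ↦ f_ε` gives the claim.
-/

lemma sg_not (b : Bool) : sg (!b) = -sg b := by
  cases b <;> simp [sg]

lemma sum_sg_apply_eq_zero {ι : Type*} [Fintype ι] [DecidableEq ι] (i : ι) :
    ∑ e : ι → Bool, sg (e i) = 0 := by
  let toggle : (ι → Bool) ≃ (ι → Bool) :=
    ⟨fun e => Function.update e i (!e i), fun e => Function.update e i (!e i),
      fun e => by simp, fun e => by simp⟩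
  have h : ∑ e : ι → Bool, sg (e i) = -∑ e : ι → Bool, sg (e i) := by
    conv_lhs => rw [← toggle.sum_comp]
    simp [toggle, sg_not, Finset.sum_neg_distrib]
  linarith

lemma sum_sum_sg_mul_eq_zero {ι : Type*} [Fintype ι] [DecidableEq ι] (c : ι → ℝ) :
    ∑ e : ι → Bool, ∑ i, sg (e i) * c i = 0 := by
  rw [Finset.sum_comm]
  simp [← Finset.sum_mul, sum_sg_apply_eq_zero]

lemma sum_ciSup_le_of_forall_sum_le {ι α : Type*} [Fintype ι] [Nonempty α] {a : ι → α → ℝ}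
    {C : ℝ} (h : ∀ g : ι → α, ∑ i, a i (g i) ≤ C) :
    ∑ i, ⨆ x, a i x ≤ C := by
  refine le_of_forall_pos_le_add fun δ hδ => ?_
  set N : ℝ := (Fintype.card ι : ℝ)
  have hδN : 0 < δ / (N + 1) := by positivity
  choose g hg using fun i => exists_lt_of_lt_ciSup (sub_lt_self (⨆ x, a i x) hδN)
  calc ∑ i, ⨆ x, a i x ≤ ∑ i, (a i (g i) + δ / (N + 1)) :=
        Finset.sum_le_sum fun i _ => by linarith [hg i]
    _ = ∑ i, a i (g i) + N * (δ / (N + 1)) := by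
        simp [Finset.sum_add_distrib, N]
    _ ≤ C + δ := by
        have : N * (δ / (N + 1)) ≤ δ := by
          rw [mul_div_assoc', div_le_iff₀ (by positivity)]
          nlinarith
        linarith [h g]

lemma IntervalIntegrable.finset_sum_apply {ι : Type*} {s : Finset ι} {f : ι → ℝ → ℝ}
    {a b : ℝ} (h : ∀ i ∈ s, IntervalIntegrable (f i) MeasureTheory.volume a b) :
    IntervalIntegrable (fun t => ∑ i ∈ s, f i t) MeasureTheory.volume a b := by
  simpa only [Finset.sum_fn] using IntervalIntegrable.sum s h

lemma sum_sum_sg_mul_eq_integral {ι : Type*} [Fintype ι] [DecidableEq ι]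
    {x : (ι → Bool) → ι → ℝ} {v : (ι → Bool) → ι → ℝ → ℝ} {c : ι → ℝ} {a b : ℝ}
    (hx : ∀ e i, x e i = c i + ∫ t in a..b, v e i t)
    (hv : ∀ e i, IntervalIntegrable (v e i) MeasureTheory.volume a b) :
    ∑ e, ∑ i, sg (e i) * x e i = ∫ t in a..b, ∑ e, ∑ i, sg (e i) * v e i t := by
  simp_rw [hx, mul_add, Finset.sum_add_distrib, sum_sum_sg_mul_eq_zero, zero_add]
  rw [intervalIntegral.integral_finsetSum fun e _ =>
    IntervalIntegrable.finset_sum_apply fun i _ => (hv e i).const_mul _]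
  refine Finset.sum_congr rfl fun e _ => ?_
  rw [intervalIntegral.integral_finsetSum fun i _ => (hv e i).const_mul _]
  simp_rw [intervalIntegral.integral_const_mul]

lemma continuousOn_apply_of_continuous_of_lipschitzWith {α E G : Type*} [TopologicalSpace α]
    [PseudoEMetricSpace E] [PseudoEMetricSpace G] {f : α → E → G} {L : NNReal}
    (hc : ∀ x, Continuous fun t => f t x) (hL : ∀ t, LipschitzWith L (f t)) {x : α → E}
    {s : Set α} (hx : ContinuousOn x s) : ContinuousOn (fun t => f t (x t)) s :=
  (continuous_prod_of_continuous_lipschitzWith (fun p : E × α => f p.2 p.1) L hc hL).comp_continuousOn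
    (hx.prodMk continuousOn_id)

lemma integral_eq_sub_of_hasDerivWithinAt_Icc {E : Type*} [NormedAddCommGroup E]
    [NormedSpace ℝ E] [CompleteSpace E] {u u' : ℝ → E} {a b : ℝ} (hab : a ≤ b)
    (hu : ∀ t ∈ Icc a b, HasDerivWithinAt u (u' t) (Icc a b) t)
    (hu' : IntervalIntegrable u' MeasureTheory.volume a b) :
    ∫ t in a..b, u' t = u b - u a :=
  intervalIntegral.integral_eq_sub_of_hasDeriv_right_of_le hab
    (fun t ht => (hu t ht).continuousWithinAt)
    (fun t ht => (hu t (Ioo_subset_Icc_self ht)).mono_of_mem_nhdsWithin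
      (mem_nhdsWithin_of_mem_nhds (Icc_mem_nhds ht.1 ht.2)))
    hu'

theorem rademacher_flow_le_integral_rademacher_field_general
    (d n : ℕ) (k : Fin d)
    (F : Set (ℝ → (Fin d → ℝ) → Fin d → ℝ)) (hF : F.Nonempty)
    (hreg : ∀ f ∈ F, (∀ x, Continuous fun t => f t x) ∧
      ∃ L : NNReal, ∀ t : ℝ, LipschitzWith L (f t))
    (z : Fin n → Fin d → ℝ)
    (φ : (ℝ → (Fin d → ℝ) → Fin d → ℝ) → (Fin d → ℝ) → ℝ → Fin d → ℝ)
    (hφ0 : ∀ f ∈ F, ∀ i : Fin n, φ f (z i) 0 = z i)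
    (hφode : ∀ f ∈ F, ∀ i : Fin n, ∀ t ∈ Icc (0:ℝ) 1,
      HasDerivWithinAt (φ f (z i)) (f t (φ f (z i) t)) (Icc 0 1) t)
    -- finiteness of the suprema
    (hbdd2 : ∀ e : Fin n → Bool, ∀ t ∈ Icc (0:ℝ) 1,
      BddAbove (Set.range fun f : F => ∑ i, sg (e i) * f.1 t (φ f.1 (z i) t) k))
    -- integrability of the inner Rademacher average
    (hint : IntervalIntegrable
      (fun t => (∑ e : Fin n → Bool, ⨆ f : F, ∑ i, sg (e i) * f.1 t (φ f.1 (z i) t) k)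
        / 2 ^ n)
      MeasureTheory.volume 0 1) :
    (∑ e : Fin n → Bool, ⨆ f : F, ∑ i, sg (e i) * φ f.1 (z i) 1 k) / 2 ^ n
      ≤ ∫ t in (0:ℝ)..1,
          (∑ e : Fin n → Bool, ⨆ f : F, ∑ i, sg (e i) * f.1 t (φ f.1 (z i) t) k)
            / 2 ^ n := by
  have : Nonempty F := hF.to_subtype
  have hfield : ∀ f ∈ F, ∀ i, IntervalIntegrable (fun t => f t (φ f (z i) t) k)
      MeasureTheory.volume 0 1 := by
    intro f hf i
    obtain ⟨hc, L, hL⟩ := hreg f hf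
    refine ((continuous_apply k).comp_continuousOn ?_).intervalIntegrable_of_Icc zero_le_one
    exact continuousOn_apply_of_continuous_of_lipschitzWith hc hL
      fun t ht => (hφode f hf i t ht).continuousWithinAt
  have hflow : ∀ f ∈ F, ∀ i, φ f (z i) 1 k = z i k + ∫ t in (0:ℝ)..1, f t (φ f (z i) t) k := by
    intro f hf i
    rw [integral_eq_sub_of_hasDerivWithinAt_Icc zero_le_one
      (fun t ht => hasDerivWithinAt_pi.1 (hφode f hf i t ht) k) (hfield f hf i), hφ0 f hf i]
    ring
  have hsup : IntervalIntegrable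
      (fun t => ∑ e : Fin n → Bool, ⨆ f : F, ∑ i, sg (e i) * f.1 t (φ f.1 (z i) t) k)
      MeasureTheory.volume 0 1 := by
    simpa using hint.mul_const (2 ^ n)
  rw [intervalIntegral.integral_div]
  gcongr
  refine sum_ciSup_le_of_forall_sum_le fun g => ?_
  rw [sum_sum_sg_mul_eq_integral (fun e i => hflow _ (g e).2 i) (fun e i => hfield _ (g e).2 i)]
  refine intervalIntegral.integral_mono_on zero_le_one ?_ hsup
    fun t ht => Finset.sum_le_sum fun e _ => le_ciSup (hbdd2 e t ht) (g e)
  exact IntervalIntegrable.finset_sum_apply fun e _ =>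
    IntervalIntegrable.finset_sum_apply fun i _ => (hfield _ (g e).2 i).const_mul _

/-- Rademacher complexity of the `k`-th component of time-1 flow maps is bounded by the
time-integral of the Rademacher complexity of the `k`-th component of the generating
vector fields evaluated along the flows:
`E_ε[sup_{f ∈ F} Σᵢ εᵢ (φ^f(1,zᵢ))ₖ] ≤ ∫₀¹ E_ε[sup_{f ∈ F} Σᵢ εᵢ fₖ(t, φ^f(t,zᵢ))] dt`. -/
theorem rademacher_flow_le_integral_rademacher_field
    (d n : ℕ) (k : Fin d)
    (F : Set (ℝ → (Fin d → ℝ) → Fin d → ℝ)) (hF : F.Nonempty)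
    (hreg : ∀ f ∈ F, (∀ x, Continuous fun t => f t x) ∧
      ∃ L : NNReal, ∀ t : ℝ, LipschitzWith L (f t))
    (z : Fin n → Fin d → ℝ)
    (φ : (ℝ → (Fin d → ℝ) → Fin d → ℝ) → (Fin d → ℝ) → ℝ → Fin d → ℝ)
    (hφ0 : ∀ f ∈ F, ∀ i : Fin n, φ f (z i) 0 = z i)
    (hφode : ∀ f ∈ F, ∀ i : Fin n, ∀ t ∈ Icc (0:ℝ) 1,
      HasDerivWithinAt (φ f (z i)) (f t (φ f (z i) t)) (Icc 0 1) t)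
    -- finiteness of the suprema
    (hbdd1 : ∀ e : Fin n → Bool,
      BddAbove (Set.range fun f : F => ∑ i, sg (e i) * φ f.1 (z i) 1 k))
    (hbdd2 : ∀ e : Fin n → Bool, ∀ t ∈ Icc (0:ℝ) 1,
      BddAbove (Set.range fun f : F => ∑ i, sg (e i) * f.1 t (φ f.1 (z i) t) k))
    -- integrability of the inner Rademacher average
    (hint : IntervalIntegrable
      (fun t => (∑ e : Fin n → Bool, ⨆ f : F, ∑ i, sg (e i) * f.1 t (φ f.1 (z i) t) k)
        / 2 ^ n)
      MeasureTheory.volume 0 1) :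
    (∑ e : Fin n → Bool, ⨆ f : F, ∑ i, sg (e i) * φ f.1 (z i) 1 k) / 2 ^ n
      ≤ ∫ t in (0:ℝ)..1,
          (∑ e : Fin n → Bool, ⨆ f : F, ∑ i, sg (e i) * f.1 t (φ f.1 (z i) t) k)
            / 2 ^ n :=
  rademacher_flow_le_integral_rademacher_field_general d n k F hF hreg z φ hφ0 hφode hbdd2 hint
end

section
/- Consider the linear-quadratic particle shooting system: σ: ℝ → ℝ is continuously differentiable and applied componentwise, M_A and M_b are symmetric positive definite d×d real matrices, and (q_j, p_j): [0,T] → ℝ^d × ℝ^d (j = 1, ..., K) are differentiable curves satisfying, for all t ∈ [0,T], q̇_j(t) = A(t) σ(q_j(t)) + b(t) and ṗ_j(t) = − Dσ(q_j(t)) A(t)^⊤ p_j(t), where Dσ(q) denotes the diagonal matrix with diagonal entries σ'(q^1), ..., σ'(q^d), and where A(t) = − M_A^{-1} Σ_{j=1}^K p_j(t) σ(q_j(t))^⊤ and b(t) = − M_b^{-1} Σ_{j=1}^K p_j(t). Then the function t ↦ R(t) := ½ Tr(A(t)^⊤ M_A A(t)) + ½ b(t)^⊤ M_b b(t) is constant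 on [0,T]. -/
/-!
With `C = ∑ⱼ pⱼ σ(qⱼ)ᵀ` and `β = ∑ⱼ pⱼ` the controls are `A = -M_A⁻¹ C` and `b = -M_b⁻¹ β`, so
`R = ½ tr(Cᵀ M_A⁻¹ C) + ½ βᵀ M_b⁻¹ β`. As the weights are symmetric,
`Ṙ = tr(Ċᵀ M_A⁻¹ C) + β̇ᵀ M_b⁻¹ β = -(tr(Ċᵀ A) + β̇ᵀ b)`, and since
`Ċ = ∑ⱼ (ṗⱼ σ(qⱼ)ᵀ + pⱼ (Dσ(qⱼ) q̇ⱼ)ᵀ)` this is a sum over particles of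
`ṗⱼ · q̇ⱼ + pⱼ · A Dσ(qⱼ) q̇ⱼ`, which vanishes because `ṗⱼ = -Dσ(qⱼ) Aᵀ pⱼ`.
-/

open Set Matrix

attribute [local instance] Matrix.normedAddCommGroup Matrix.normedSpace

section Bilinear

variable {𝕜 E F G : Type*} [NontriviallyNormedField 𝕜] [CompleteSpace 𝕜]
  [NormedAddCommGroup E] [NormedSpace 𝕜 E] [FiniteDimensional 𝕜 E]
  [NormedAddCommGroup F] [NormedSpace 𝕜 F] [FiniteDimensional 𝕜 F]
  [NormedAddCommGroup G] [NormedSpace 𝕜 G]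
  {u : 𝕜 → E} {v : 𝕜 → F} {u' : E} {v' : F} {s : Set 𝕜} {t : 𝕜}

theorem LinearMap.hasDerivWithinAt_of_bilinear (B : E →ₗ[𝕜] F →ₗ[𝕜] G)
    (hu : HasDerivWithinAt u u' s t) (hv : HasDerivWithinAt v v' s t) :
    HasDerivWithinAt (fun x ↦ B (u x) (v x)) (B (u t) v' + B u' (v t)) s t :=
  B.toContinuousBilinearMap.hasDerivWithinAt_of_bilinear hu hv

theorem LinearMap.hasDerivWithinAt_of_symm_bilinear (B : E →ₗ[𝕜] E →ₗ[𝕜] G)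
    (hB : ∀ x y, B x y = B y x) (hu : HasDerivWithinAt u u' s t) :
    HasDerivWithinAt (fun x ↦ B (u x) (u x)) (2 • B u' (u t)) s t := by
  simpa only [hB (u t), two_smul] using B.hasDerivWithinAt_of_bilinear hu hu

end Bilinear

namespace Matrix

variable {m n R : Type*} [Fintype m] [Fintype n] [CommRing R]

def frobeniusBilin (N : Matrix n n R) : Matrix n m R →ₗ[R] Matrix n m R →ₗ[R] R :=
  LinearMap.mk₂ R (fun X Y ↦ trace (Xᵀ * N * Y))
    (fun _ _ _ ↦ by simp [Matrix.add_mul, trace_add])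
    (fun _ _ _ ↦ by simp [trace_smul])
    (fun _ _ _ ↦ by simp [Matrix.mul_add, trace_add])
    (fun _ _ _ ↦ by simp [trace_smul])

@[simp]
theorem frobeniusBilin_apply (N : Matrix n n R) (X Y : Matrix n m R) :
    frobeniusBilin N X Y = trace (Xᵀ * N * Y) := rfl

theorem IsSymm.frobeniusBilin_comm {N : Matrix n n R} (hN : N.IsSymm) (X Y : Matrix n m R) :
    frobeniusBilin N X Y = frobeniusBilin N Y X := by
  rw [frobeniusBilin_apply, ← trace_transpose]
  simp [transpose_mul, hN.eq, Matrix.mul_assoc]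

theorem trace_transpose_vecMulVec_mul (x : n → R) (y : m → R) (M : Matrix n m R) :
    trace ((vecMulVec x y)ᵀ * M) = x ⬝ᵥ M *ᵥ y := by
  rw [transpose_vecMulVec, vecMulVec_mul, trace_vecMulVec, dotProduct_comm, dotProduct_mulVec]

theorem IsSymm.dotProduct_mulVec_mulVec {D : Matrix n n R} (hD : D.IsSymm) (A : Matrix n n R)
    (x v : n → R) : x ⬝ᵥ A *ᵥ (D *ᵥ v) = (D *ᵥ (Aᵀ *ᵥ x)) ⬝ᵥ v := by
  rw [dotProduct_mulVec, ← mulVec_transpose, dotProduct_mulVec, ← mulVec_transpose, hD.eq]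

variable [DecidableEq n]

theorem IsSymm.toLinearMap₂'_comm {N : Matrix n n R} (hN : N.IsSymm) (v w : n → R) :
    toLinearMap₂' R N v w = toLinearMap₂' R N w v := by
  rw [toLinearMap₂'_apply', toLinearMap₂'_apply', dotProduct_mulVec, ← mulVec_transpose, hN.eq,
    dotProduct_comm]

-- Also true for singular `M`, where `M⁻¹ = 0`.
theorem nonsing_inv_mul_mul_nonsing_inv (M : Matrix n n R) : M⁻¹ * M * M⁻¹ = M⁻¹ := by
  rcases M.nonsing_inv_cancel_or_zero with ⟨h, -⟩ | h
  · rw [h, Matrix.one_mul]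
  · rw [h, Matrix.zero_mul, Matrix.zero_mul]

theorem IsSymm.trace_transpose_inv_mul_mul_inv_mul {M : Matrix n n R} (hM : M.IsSymm)
    (C : Matrix n m R) : trace ((M⁻¹ * C)ᵀ * M * (M⁻¹ * C)) = trace (Cᵀ * M⁻¹ * C) := by
  have : Cᵀ * M⁻¹ * M * (M⁻¹ * C) = Cᵀ * (M⁻¹ * M * M⁻¹) * C := by
    simp only [Matrix.mul_assoc]
  rw [transpose_mul, hM.inv.eq, this, nonsing_inv_mul_mul_nonsing_inv, Matrix.mul_assoc]

theorem IsSymm.inv_mulVec_dotProduct_mulVec_inv_mulVec {M : Matrix n n R} (hM : M.IsSymm)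
    (v : n → R) : (M⁻¹ *ᵥ v) ⬝ᵥ M *ᵥ (M⁻¹ *ᵥ v) = v ⬝ᵥ M⁻¹ *ᵥ v := by
  rw [dotProduct_comm, dotProduct_mulVec, ← mulVec_transpose, hM.inv.eq, mulVec_mulVec,
    mulVec_mulVec, nonsing_inv_mul_mul_nonsing_inv, dotProduct_comm]

end Matrix

theorem HasDerivWithinAt.comp_componentwise {n : Type*} [Fintype n] [DecidableEq n]
    {σ : ℝ → ℝ} (hσ : Differentiable ℝ σ) {q : ℝ → n → ℝ} {q' : n → ℝ} {s : Set ℝ} {t : ℝ}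
    (hq : HasDerivWithinAt q q' s t) :
    HasDerivWithinAt (fun u i ↦ σ (q u i)) (diagonal (fun i ↦ deriv σ (q t i)) *ᵥ q') s t := by
  rw [hasDerivWithinAt_pi] at hq ⊢
  intro i
  rw [mulVec_diagonal]
  exact (hσ (q t i)).hasDerivAt.comp_hasDerivWithinAt t (hq i)

theorem HasDerivWithinAt.vecMulVec {m n : Type*} [Fintype m] [Fintype n]
    {x : ℝ → m → ℝ} {y : ℝ → n → ℝ} {x' : m → ℝ} {y' : n → ℝ} {s : Set ℝ} {t : ℝ}
    (hx : HasDerivWithinAt x x' s t) (hy : HasDerivWithinAt y y' s t) :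
    HasDerivWithinAt (fun u ↦ vecMulVec (x u) (y u))
      (vecMulVec (x t) y' + vecMulVec x' (y t)) s t :=
  (vecMulVecBilin ℝ ℝ).hasDerivWithinAt_of_bilinear hx hy

-- The left side is `tr(Ċᵀ A) + β̇ᵀ b` along the shooting dynamics, with `D j = σ'(qⱼ)`.
theorem shooting_energy_balance {ι n R : Type*} [Fintype ι] [Fintype n] [DecidableEq n]
    [CommRing R] (A : Matrix n n R) (b : n → R) (D p s : ι → n → R) :
    trace ((∑ j, (vecMulVec (p j) (diagonal (D j) *ᵥ (A *ᵥ s j + b))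
        + vecMulVec (-(diagonal (D j) *ᵥ (Aᵀ *ᵥ p j))) (s j)))ᵀ * A)
      + (∑ j, -(diagonal (D j) *ᵥ (Aᵀ *ᵥ p j))) ⬝ᵥ b = 0 := by
  rw [transpose_sum, Finset.sum_mul, trace_sum, sum_dotProduct, ← Finset.sum_add_distrib]
  refine Finset.sum_eq_zero fun j _ ↦ ?_
  rw [transpose_add, Matrix.add_mul, trace_add, trace_transpose_vecMulVec_mul,
    trace_transpose_vecMulVec_mul, add_assoc, ← dotProduct_add,
    (isSymm_diagonal (D j)).dotProduct_mulVec_mulVec, neg_dotProduct, add_neg_cancel]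

section Shooting

variable {ι n : Type*} [Fintype ι] [Fintype n] [DecidableEq n] (σ : ℝ → ℝ) (MA Mb : Matrix n n ℝ)

noncomputable def shootingHamiltonian (q p : ι → n → ℝ) : ℝ :=
  let C := ∑ j, vecMulVec (p j) (fun i ↦ σ (q j i))
  let β := ∑ j, p j
  (1/2) * trace (Cᵀ * MA⁻¹ * C) + (1/2) * (β ⬝ᵥ Mb⁻¹ *ᵥ β)

variable {σ MA Mb}

theorem regularizer_eq_shootingHamiltonian (hMA : MA.IsSymm) (hMb : Mb.IsSymm)
    {q p : ι → n → ℝ} {A : Matrix n n ℝ} {b : n → ℝ}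
    (hA : A = -(MA⁻¹ * ∑ j, vecMulVec (p j) (fun i ↦ σ (q j i))))
    (hb : b = -(Mb⁻¹ *ᵥ ∑ j, p j)) :
    (1/2) * trace (Aᵀ * MA * A) + (1/2) * (b ⬝ᵥ Mb *ᵥ b) = shootingHamiltonian σ MA Mb q p := by
  simp only [hA, hb, shootingHamiltonian, transpose_neg, neg_mul, mul_neg, neg_neg, mulVec_neg,
    dotProduct_neg, neg_dotProduct, hMA.trace_transpose_inv_mul_mul_inv_mul,
    hMb.inv_mulVec_dotProduct_mulVec_inv_mulVec]

theorem hasDerivWithinAt_shootingHamiltonian (hσ : Differentiable ℝ σ) (hMA : MA.IsSymm)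
    (hMb : Mb.IsSymm) {q p : ι → ℝ → n → ℝ} {A : Matrix n n ℝ} {b : n → ℝ} {s : Set ℝ} {t : ℝ}
    (hA : A = -(MA⁻¹ * ∑ j, vecMulVec (p j t) (fun i ↦ σ (q j t i))))
    (hb : b = -(Mb⁻¹ *ᵥ ∑ j, p j t))
    (hq : ∀ j, HasDerivWithinAt (q j) (A *ᵥ (fun i ↦ σ (q j t i)) + b) s t)
    (hp : ∀ j, HasDerivWithinAt (p j)
      (-(diagonal (fun i ↦ deriv σ (q j t i)) *ᵥ (Aᵀ *ᵥ p j t))) s t) :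
    HasDerivWithinAt (fun u ↦ shootingHamiltonian σ MA Mb (fun j ↦ q j u) (fun j ↦ p j u))
      0 s t := by
  set C : ℝ → Matrix n n ℝ := fun u ↦ ∑ j, vecMulVec (p j u) (fun i ↦ σ (q j u i))
  set β : ℝ → n → ℝ := fun u ↦ ∑ j, p j u
  have hC : HasDerivWithinAt C _ s t := HasDerivWithinAt.fun_sum fun j _ ↦
    (hp j).vecMulVec ((hq j).comp_componentwise hσ)
  have hβ : HasDerivWithinAt β _ s t := HasDerivWithinAt.fun_sum fun j _ ↦ hp j
  have hNC : MA⁻¹ * C t = -A := by rw [hA, neg_neg]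
  have hNβ : Mb⁻¹ *ᵥ β t = -b := by rw [hb, neg_neg]
  have hH := (((frobeniusBilin MA⁻¹).hasDerivWithinAt_of_symm_bilinear
    hMA.inv.frobeniusBilin_comm hC).const_mul (1/2)).fun_add
    (((toLinearMap₂' ℝ Mb⁻¹).hasDerivWithinAt_of_symm_bilinear
    hMb.inv.toLinearMap₂'_comm hβ).const_mul (1/2))
  have hfun : (fun u ↦ shootingHamiltonian σ MA Mb (fun j ↦ q j u) (fun j ↦ p j u)) = fun u ↦
      (1/2) * frobeniusBilin MA⁻¹ (C u) (C u) + (1/2) * toLinearMap₂' ℝ Mb⁻¹ (β u) (β u) := by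
    simp only [shootingHamiltonian, frobeniusBilin_apply, toLinearMap₂'_apply', C, β]
  rw [hfun]
  refine hH.congr_deriv ?_
  have := shooting_energy_balance A b (fun j i ↦ deriv σ (q j t i)) (fun j ↦ p j t)
    (fun j i ↦ σ (q j t i))
  rw [frobeniusBilin_apply, toLinearMap₂'_apply', Matrix.mul_assoc, hNC, hNβ]
  simp only [nsmul_eq_mul, Matrix.mul_neg, trace_neg, dotProduct_neg]
  linear_combination -this

end Shooting

theorem shooting_hamiltonian_conserved_general
    (d K : ℕ) (σ : ℝ → ℝ) (hσ : ContDiff ℝ 1 σ)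
    (T : ℝ)
    (MA Mb : Matrix (Fin d) (Fin d) ℝ)
    (hMAsymm : MA.IsSymm)
    (hMbsymm : Mb.IsSymm)
    (q p : Fin K → ℝ → Fin d → ℝ)
    (A : ℝ → Matrix (Fin d) (Fin d) ℝ) (b : ℝ → Fin d → ℝ)
    (hA : ∀ t, A t = -(MA⁻¹ * ∑ j, vecMulVec (p j t) (fun i => σ (q j t i))))
    (hb : ∀ t, b t = -(Mb⁻¹.mulVec (∑ j, p j t)))
    (hq : ∀ j, ∀ t ∈ Icc (0:ℝ) T,
      HasDerivWithinAt (q j) ((A t).mulVec (fun i => σ (q j t i)) + b t) (Icc 0 T) t)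
    (hp : ∀ j, ∀ t ∈ Icc (0:ℝ) T,
      HasDerivWithinAt (p j)
        (-(Matrix.diagonal (fun i => deriv σ (q j t i))).mulVec ((A t)ᵀ.mulVec (p j t)))
        (Icc 0 T) t) :
    ∀ t ∈ Icc (0:ℝ) T,
      (1/2) * Matrix.trace ((A t)ᵀ * MA * A t) + (1/2) * (b t ⬝ᵥ Mb.mulVec (b t))
        = (1/2) * Matrix.trace ((A 0)ᵀ * MA * A 0) + (1/2) * (b 0 ⬝ᵥ Mb.mulVec (b 0)) := by
  have hH : ∀ u ∈ Icc 0 T, HasDerivWithinAt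
      (fun u ↦ shootingHamiltonian σ MA Mb (fun j ↦ q j u) (fun j ↦ p j u)) 0 (Icc 0 T) u :=
    fun u hu ↦ hasDerivWithinAt_shootingHamiltonian (hσ.differentiable one_ne_zero) hMAsymm
      hMbsymm (hA u) (hb u) (fun j ↦ hq j u hu) (fun j ↦ hp j u hu)
  have hconst := constant_of_has_deriv_right_zero (fun u hu ↦ (hH u hu).continuousWithinAt)
    fun u hu ↦ (hH u (Ico_subset_Icc_self hu)).mono_of_mem_nhdsWithin (Icc_mem_nhdsGE_of_mem hu)
  intro t ht
  rw [regularizer_eq_shootingHamiltonian hMAsymm hMbsymm (hA t) (hb t),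
    regularizer_eq_shootingHamiltonian hMAsymm hMbsymm (hA 0) (hb 0)]
  exact hconst t ht

/-- Conservation of the quadratic regularizer along the linear-quadratic particle
shooting system: with `A(t) = -M_A⁻¹ ∑ⱼ pⱼ(t) σ(qⱼ(t))ᵀ` and `b(t) = -M_b⁻¹ ∑ⱼ pⱼ(t)`,
along the Hamiltonian particle dynamics, `t ↦ ½ Tr(A(t)ᵀ M_A A(t)) + ½ b(t)ᵀ M_b b(t)`
is constant on `[0,T]`. -/
theorem shooting_hamiltonian_conserved
    (d K : ℕ) (σ : ℝ → ℝ) (hσ : ContDiff ℝ 1 σ)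
    (T : ℝ) (hT : 0 < T)
    (MA Mb : Matrix (Fin d) (Fin d) ℝ)
    (hMAsymm : MA.IsSymm) (hMApos : MA.PosDef)
    (hMbsymm : Mb.IsSymm) (hMbpos : Mb.PosDef)
    (q p : Fin K → ℝ → Fin d → ℝ)
    (A : ℝ → Matrix (Fin d) (Fin d) ℝ) (b : ℝ → Fin d → ℝ)
    (hA : ∀ t, A t = -(MA⁻¹ * ∑ j, vecMulVec (p j t) (fun i => σ (q j t i))))
    (hb : ∀ t, b t = -(Mb⁻¹.mulVec (∑ j, p j t)))
    (hq : ∀ j, ∀ t ∈ Icc (0:ℝ) T,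
      HasDerivWithinAt (q j) ((A t).mulVec (fun i => σ (q j t i)) + b t) (Icc 0 T) t)
    (hp : ∀ j, ∀ t ∈ Icc (0:ℝ) T,
      HasDerivWithinAt (p j)
        (-(Matrix.diagonal (fun i => deriv σ (q j t i))).mulVec ((A t)ᵀ.mulVec (p j t)))
        (Icc 0 T) t) :
    ∀ t ∈ Icc (0:ℝ) T,
      (1/2) * Matrix.trace ((A t)ᵀ * MA * A t) + (1/2) * (b t ⬝ᵥ Mb.mulVec (b t))
        = (1/2) * Matrix.trace ((A 0)ᵀ * MA * A 0) + (1/2) * (b 0 ⬝ᵥ Mb.mulVec (b 0)) :=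
  shooting_hamiltonian_conserved_general d K σ hσ T MA Mb hMAsymm hMbsymm q p A b hA hb hq hp
end
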